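/- arXiv:0912.0795 — 2 statements merged into one kernel-verified Lean document; each statement's English description precedes it below -/
import Mathlib

section
/- For all n ≥ 2, the ratio of consecutive Apéry numbers satisfies A_n / A_{n-1} ≥ (33n^3 - 48n^2 + 24n - 4)/n^3. -/
/-!
Writing `A_n = Σ_k u(n,k)^2` with `u(n,k) = C(n,k) C(n+k,k)`, Zeilberger's algorithm produces a
certificate `B(n,k)` such that the recurrence operator applied to the `k`-th summand equals
`B(n-1,k) - B(n-1,k-1)`; summing over `k` telescopes to Apéry's recurrence
`n³ A_n = P(n) A_{n-1} - (n-1)³ A_{n-2}`, `P(n) = 34n³ - 51n² + 27n - 5`.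
Since `A` is increasing, `A_{n-2} ≤ A_{n-1}`, whence `n³ A_n ≥ (P(n) - (n-1)³) A_{n-1}`, and
`P(n) - (n-1)³ = 33n³ - 48n² + 24n - 4`.
-/

/-- The Apéry numbers `A_n = Σ_{k=0}^n C(n,k)^2 C(n+k,k)^2`. -/
def aperyA (n : ℕ) : ℕ :=
  ∑ k ∈ Finset.range (n + 1), (Nat.choose n k) ^ 2 * (Nat.choose (n + k) k) ^ 2

open Finset

def aperyTerm (n k : ℕ) : ℕ := n.choose k * (n + k).choose k

lemma aperyTerm_eq_zero_of_lt {n k : ℕ} (h : n < k) : aperyTerm n k = 0 := by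
  simp [aperyTerm, Nat.choose_eq_zero_of_lt h]

lemma aperyTerm_self (n : ℕ) : aperyTerm n n = n.centralBinom := by
  simp [aperyTerm, Nat.centralBinom, two_mul]

lemma aperyTerm_le_succ_left (n k : ℕ) : aperyTerm n k ≤ aperyTerm (n + 1) k :=
  Nat.mul_le_mul (Nat.choose_le_choose k n.le_succ) (Nat.choose_le_choose k (by omega))

lemma aperyTerm_succ_left (n k : ℕ) :
    (n + 1 - k) * aperyTerm (n + 1) k = (n + 1 + k) * aperyTerm n k := by
  have h₁ := Nat.choose_mul_succ_eq n k
  have h₂ := Nat.choose_mul_succ_eq (n + k) k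
  rw [show n + k + 1 - k = n + 1 by omega, show n + k + 1 = n + 1 + k by omega] at h₂
  refine Nat.eq_of_mul_eq_mul_right n.succ_pos ?_
  unfold aperyTerm
  calc (n + 1 - k) * ((n + 1).choose k * (n + 1 + k).choose k) * (n + 1)
      = ((n + 1).choose k * (n + 1 - k)) * ((n + 1 + k).choose k * (n + 1)) := by ring
    _ = (n.choose k * (n + 1)) * ((n + k).choose k * (n + 1 + k)) := by rw [← h₁, ← h₂]
    _ = (n + 1 + k) * (n.choose k * (n + k).choose k) * (n + 1) := by ring

lemma aperyTerm_succ_right (n k : ℕ) :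
    (k + 1) ^ 2 * aperyTerm n (k + 1) = (n - k) * (n + k + 1) * aperyTerm n k := by
  have h₁ := Nat.choose_succ_right_eq n k
  have h₂ := Nat.add_one_mul_choose_eq (n + k) k
  unfold aperyTerm
  rw [show n + (k + 1) = n + k + 1 by omega]
  calc (k + 1) ^ 2 * (n.choose (k + 1) * (n + k + 1).choose (k + 1))
      = (n.choose (k + 1) * (k + 1)) * ((n + k + 1).choose (k + 1) * (k + 1)) := by ring
    _ = (n.choose k * (n - k)) * ((n + k + 1) * (n + k).choose k) := by rw [h₁, h₂]
    _ = (n - k) * (n + k + 1) * (n.choose k * (n + k).choose k) := by ring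

lemma aperyA_eq_sum_of_le {n N : ℕ} (h : n + 1 ≤ N) :
    aperyA n = ∑ k ∈ range N, aperyTerm n k ^ 2 := by
  simp only [aperyA, aperyTerm, mul_pow]
  refine sum_subset (range_subset_range.2 h) fun k _ hk => ?_
  simp [Nat.choose_eq_zero_of_lt (not_lt.1 (mt mem_range.2 hk))]

lemma aperyA_pos (n : ℕ) : 0 < aperyA n :=
  sum_pos' (fun _ _ => Nat.zero_le _) ⟨0, mem_range.2 n.succ_pos, by simp⟩

lemma aperyA_le_succ (n : ℕ) : aperyA n ≤ aperyA (n + 1) := by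
  rw [aperyA_eq_sum_of_le (N := n + 2) (by omega), aperyA_eq_sum_of_le le_rfl]
  gcongr with k
  exact aperyTerm_le_succ_left n k

/-- Zeilberger's certificate for Apéry's recurrence, see `aperyDefect_succ`. -/
def aperyCert (n k : ℕ) : ℤ :=
  4 * (2 * n + 1) * (k * (2 * k + 1) - (2 * n + 1) ^ 2) * aperyTerm n k ^ 2

/-- Apéry's recurrence operator, at `n + 2`, applied to the `k`-th summand of `aperyA`. -/
def aperyDefect (n k : ℕ) : ℤ :=
  ((n : ℤ) + 2) ^ 3 * aperyTerm (n + 2) k ^ 2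
    - (34 * ((n : ℤ) + 2) ^ 3 - 51 * ((n : ℤ) + 2) ^ 2 + 27 * ((n : ℤ) + 2) - 5)
      * aperyTerm (n + 1) k ^ 2
    + ((n : ℤ) + 1) ^ 3 * aperyTerm n k ^ 2

lemma aperyDefect_zero (n : ℕ) : aperyDefect n 0 = aperyCert (n + 1) 0 := by
  simp only [aperyDefect, aperyCert, aperyTerm, Nat.choose_zero_right]
  push_cast
  ring

lemma aperyDefect_succ_of_le {n k : ℕ} (hk : k ≤ n) :
    aperyDefect n (k + 1) = aperyCert (n + 1) (k + 1) - aperyCert (n + 1) k := by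
  obtain ⟨d, rfl⟩ := Nat.exists_eq_add_of_le hk
  have h₁ := aperyTerm_succ_left (k + d) (k + 1)
  have h₂ := aperyTerm_succ_left (k + d + 1) (k + 1)
  have h₃ := aperyTerm_succ_right (k + d + 1) k
  rw [show k + d + 1 - (k + 1) = d by omega] at h₁
  rw [show k + d + 1 + 1 - (k + 1) = d + 1 by omega] at h₂
  rw [show k + d + 1 - k = d + 1 by omega] at h₃
  have c₁ := congrArg (Nat.cast : ℕ → ℚ) h₁
  have c₂ := congrArg (Nat.cast : ℕ → ℚ) h₂
  have c₃ := congrArg (Nat.cast : ℕ → ℚ) h₃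
  push_cast at c₁ c₂ c₃
  -- The contiguity relations make the other three terms rational multiples of
  -- `aperyTerm (k + d + 1) (k + 1)`.
  have hx : (aperyTerm (k + d) (k + 1) : ℚ)
      = d * aperyTerm (k + d + 1) (k + 1) / (2 * k + d + 2) := by
    rw [eq_div_iff (by positivity)]
    linear_combination -c₁
  have hz : (aperyTerm (k + d + 2) (k + 1) : ℚ)
      = (2 * k + d + 3) * aperyTerm (k + d + 1) (k + 1) / (d + 1) := by
    rw [eq_div_iff (by positivity)]
    linear_combination c₂
  have hw : (aperyTerm (k + d + 1) k : ℚ)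
      = (k + 1) ^ 2 * aperyTerm (k + d + 1) (k + 1) / ((d + 1) * (2 * k + d + 2)) := by
    rw [eq_div_iff (by positivity)]
    linear_combination -c₃
  have key : (aperyDefect (k + d) (k + 1) : ℚ)
      = aperyCert (k + d + 1) (k + 1) - aperyCert (k + d + 1) k := by
    simp only [aperyDefect, aperyCert]
    push_cast
    rw [hx, hz, hw]
    field_simp
    ring
  exact_mod_cast key

lemma aperyDefect_succ_self (n : ℕ) :
    aperyDefect n (n + 2) = aperyCert (n + 1) (n + 2) - aperyCert (n + 1) (n + 1) := by
  have h := Nat.succ_mul_centralBinom_succ (n + 1)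
  simp only [aperyDefect, aperyCert, aperyTerm_eq_zero_of_lt (by omega : n < n + 2),
    aperyTerm_eq_zero_of_lt (by omega : n + 1 < n + 2), aperyTerm_self]
  have c := congrArg (Nat.cast : ℕ → ℤ) h
  push_cast at c ⊢
  linear_combination ((n : ℤ) + 2) * (((n : ℤ) + 2) * (n + 2).centralBinom
    + 2 * (2 * ((n : ℤ) + 1) + 1) * (n + 1).centralBinom) * c

lemma aperyDefect_succ {n k : ℕ} (hk : k ≤ n + 1) :
    aperyDefect n (k + 1) = aperyCert (n + 1) (k + 1) - aperyCert (n + 1) k := by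
  rcases hk.lt_or_eq with hk | rfl
  · exact aperyDefect_succ_of_le (Nat.lt_succ_iff.1 hk)
  · exact aperyDefect_succ_self n

lemma sum_aperyDefect (n : ℕ) : ∑ k ∈ range (n + 3), aperyDefect n k = 0 := by
  rw [sum_range_succ', sum_congr rfl fun k hk => aperyDefect_succ (by simp at hk; omega),
    sum_range_sub, aperyDefect_zero, sub_add_cancel]
  simp [aperyCert, aperyTerm_eq_zero_of_lt]

theorem aperyA_recurrence (n : ℕ) :
    ((n : ℤ) + 2) ^ 3 * aperyA (n + 2)
      = (34 * ((n : ℤ) + 2) ^ 3 - 51 * ((n : ℤ) + 2) ^ 2 + 27 * ((n : ℤ) + 2) - 5)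
          * aperyA (n + 1)
        - ((n : ℤ) + 1) ^ 3 * aperyA n := by
  have h := sum_aperyDefect n
  simp only [aperyDefect, sum_add_distrib, sum_sub_distrib, ← mul_sum] at h
  have hA : ∀ m ≤ n + 2, (aperyA m : ℤ) = ∑ k ∈ range (n + 3), (aperyTerm m k : ℤ) ^ 2 :=
    fun m hm => by rw [aperyA_eq_sum_of_le (by omega : m + 1 ≤ n + 3)]; push_cast; rfl
  rw [hA n (by omega), hA (n + 1) (by omega), hA (n + 2) le_rfl]
  linear_combination h

theorem aperyA_succ_succ_lower_bound (n : ℕ) :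
    (33 * ((n : ℤ) + 2) ^ 3 - 48 * ((n : ℤ) + 2) ^ 2 + 24 * ((n : ℤ) + 2) - 4) * aperyA (n + 1)
      ≤ aperyA (n + 2) * ((n : ℤ) + 2) ^ 3 := by
  have hmono := mul_le_mul_of_nonneg_left (Int.ofNat_le.2 (aperyA_le_succ n))
    (by positivity : (0 : ℤ) ≤ ((n : ℤ) + 1) ^ 3)
  linarith [aperyA_recurrence n]

theorem aperyA_ratio_lower_bound (n : ℕ) (hn : 2 ≤ n) :
    (33 * (n : ℝ) ^ 3 - 48 * (n : ℝ) ^ 2 + 24 * (n : ℝ) - 4) / (n : ℝ) ^ 3 ≤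
      (aperyA n : ℝ) / (aperyA (n - 1) : ℝ) := by
  obtain ⟨m, rfl⟩ : ∃ m, n = m + 2 := ⟨n - 2, by omega⟩
  rw [show m + 2 - 1 = m + 1 by omega,
    div_le_div_iff₀ (by positivity) (by exact_mod_cast aperyA_pos (m + 1))]
  exact_mod_cast aperyA_succ_succ_lower_bound m
end

section
/- For all n ≥ 20, B_n / B_{n-1} < T(n), where T(n) = 11/2 + (5√5)/2 - (11/2 + (5√5)/2)/n + ((7√5)/10 + 3/2)/n^2 + 1/(25n^3) + (1/25 + (23√5)/1250)/n^4. -/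
/-!
Zeilberger's method gives the recurrence: up to a factor, the recurrence operator applied to the
summand is `G(n, k + 1) - G(n, k)` for an explicit certificate `G`, so it telescopes in `k`. For
`r_n = B_{n+1} / B_n` it reads `r_{n+1} = f_{n+2}(r_n)` with `f_m(r) = 11 - 11/m + 3/m² +
(m-1)²/(m² r)`, which is decreasing in `r`. Hence the two-sided bound `f_{n+1}(T(n)) < r_n <
T(n+1)` propagates from `n = 6`, where it is checked numerically: the lower bound at `n + 1`
follows from the upper one at `n`, and the upper bound at `n + 1` from the lower one at `n` since
`f_{n+2}(f_{n+1}(T(n))) < T(n+2)`, a polynomial inequality in `n` and `√5`.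
-/

/-- The Apéry numbers `B_n = Σ_{k=0}^n C(n,k)^2 C(n+k,k)`. -/
def aperyB (n : ℕ) : ℕ :=
  ∑ k ∈ Finset.range (n + 1), (Nat.choose n k) ^ 2 * Nat.choose (n + k) k

open Finset

section Choose

variable {R : Type*} [CommRing R]

theorem Nat.cast_choose_mul_succ (n k : ℕ) :
    (n.choose k : R) * (n + 1) = (n + 1).choose k * (n + 1 - k) := by
  rcases le_or_gt k (n + 1) with h | h
  · exact_mod_cast congrArg (Nat.cast : ℕ → R) (Nat.choose_mul_succ_eq n k) |>.trans
      (by push_cast [Nat.cast_sub h]; ring)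
  · simp [Nat.choose_eq_zero_of_lt h, Nat.choose_eq_zero_of_lt (by omega : n < k)]

theorem Nat.cast_choose_succ_right_mul (n k : ℕ) :
    (n.choose (k + 1) : R) * (k + 1) = n.choose k * (n - k) := by
  rcases le_or_gt k n with h | h
  · exact_mod_cast congrArg (Nat.cast : ℕ → R) (Nat.choose_succ_right_eq n k) |>.trans
      (by push_cast [Nat.cast_sub h]; ring)
  · simp [Nat.choose_eq_zero_of_lt h, Nat.choose_eq_zero_of_lt (by omega : n < k + 1)]

theorem Nat.cast_add_choose_mul (n k : ℕ) :
    ((n + 1 + k).choose k : R) * (n + 1) = (n + k).choose k * (n + k + 1) := by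
  have h := Nat.cast_choose_mul_succ (R := R) (n + k) k
  rw [show n + k + 1 = n + 1 + k by omega] at h
  push_cast at h ⊢
  linear_combination -h

end Choose

noncomputable def aperySummand (n k : ℕ) : ℝ := (n.choose k : ℝ) ^ 2 * (n + k).choose k

theorem aperyB_eq_sum_aperySummand {n m : ℕ} (h : n + 1 ≤ m) :
    (aperyB n : ℝ) = ∑ k ∈ range m, aperySummand n k := by
  simp only [aperyB, aperySummand, Nat.cast_sum, Nat.cast_mul, Nat.cast_pow]
  refine sum_subset (range_subset_range.2 h) fun k _ hk => ?_
  rw [Nat.choose_eq_zero_of_lt (by simpa using hk)]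
  simp

/-- Zeilberger's certificate for the Apéry recurrence. -/
noncomputable def aperyCertificate (n k : ℕ) : ℝ :=
  (k : ℝ) ^ 3 * ((k : ℝ) ^ 2 + (6 * n + 7) * k - (n + 2) * (11 * n + 15)) *
    ((n + 2).choose k : ℝ) ^ 2 * (n + k).choose k

theorem aperySummand_telescope (n k : ℕ) :
    ((n : ℝ) + 1) * (n + 2) ^ 2 * ((n + 2) ^ 2 * aperySummand (n + 2) k
      - (11 * (n + 2) ^ 2 - 11 * (n + 2) + 3) * aperySummand (n + 1) k
      - (n + 1) ^ 2 * aperySummand n k)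
      = aperyCertificate n (k + 1) - aperyCertificate n k := by
  set x : ℝ := (n : ℝ)
  set y : ℝ := (k : ℝ)
  have hx₁ : x + 1 ≠ 0 := by positivity
  have hx₂ : x + 2 ≠ 0 := by positivity
  have hy₁ : y + 1 ≠ 0 := by positivity
  have hA : ((n + 1).choose k : ℝ) * (x + 2) = (n + 2).choose k * (x + 2 - y) := by
    have := Nat.cast_choose_mul_succ (R := ℝ) (n + 1) k
    push_cast at this; linear_combination this
  have hB : (n.choose k : ℝ) * (x + 1) = (n + 1).choose k * (x + 1 - y) :=
    Nat.cast_choose_mul_succ n k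
  have hC : ((n + 1 + k).choose k : ℝ) * (x + 1) = (n + k).choose k * (x + y + 1) :=
    Nat.cast_add_choose_mul n k
  have hD : ((n + 2 + k).choose k : ℝ) * (x + 2) = (n + 1 + k).choose k * (x + y + 2) := by
    have : ((n + 2 + k).choose k : ℝ) * ((n + 1 : ℕ) + 1)
        = (n + 1 + k).choose k * ((n + 1 : ℕ) + k + 1) :=
      Nat.cast_add_choose_mul (n + 1) k
    push_cast at this; linear_combination this
  have hE : ((n + 2).choose (k + 1) : ℝ) * (y + 1) = (n + 2).choose k * (x + 2 - y) := by
    have := Nat.cast_choose_succ_right_mul (R := ℝ) (n + 2) k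
    push_cast at this; linear_combination this
  have hF : ((n + (k + 1)).choose (k + 1) : ℝ) * (y + 1) = (n + k).choose k * (x + y + 1) := by
    have := congrArg (Nat.cast : ℕ → ℝ) (Nat.add_one_mul_choose_eq (n + k) k)
    push_cast at this; linear_combination -this
  set a : ℝ := ((n + 2).choose k : ℝ)
  set b : ℝ := ((n + k).choose k : ℝ)
  have e₁ : ((n + 1).choose k : ℝ) = a * (x + 2 - y) / (x + 2) := by
    field_simp; linear_combination hA
  have e₀ : (n.choose k : ℝ) = a * (x + 2 - y) * (x + 1 - y) / ((x + 2) * (x + 1)) := by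
    field_simp; linear_combination (x + 2) * hB + (x + 1 - y) * hA
  have f₁ : ((n + 1 + k).choose k : ℝ) = b * (x + y + 1) / (x + 1) := by
    field_simp; linear_combination hC
  have f₂ : ((n + 2 + k).choose k : ℝ)
      = b * (x + y + 1) * (x + y + 2) / ((x + 2) * (x + 1)) := by
    field_simp; linear_combination (x + 1) * hD + (x + y + 2) * hC
  have e₁' : ((n + 2).choose (k + 1) : ℝ) = a * (x + 2 - y) / (y + 1) := by
    field_simp; linear_combination hE
  have f₁' : ((n + (k + 1)).choose (k + 1) : ℝ) = b * (x + y + 1) / (y + 1) := by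
    field_simp; linear_combination hF
  simp only [aperySummand, aperyCertificate]
  push_cast
  rw [e₁, e₀, f₁, f₂, e₁', f₁']
  field_simp
  ring

theorem aperyB_recurrence (n : ℕ) :
    ((n : ℝ) + 2) ^ 2 * aperyB (n + 2)
      = (11 * ((n : ℝ) + 2) ^ 2 - 11 * (n + 2) + 3) * aperyB (n + 1)
        + ((n : ℝ) + 1) ^ 2 * aperyB n := by
  have htel := sum_congr rfl fun k (_ : k ∈ range (n + 3)) => aperySummand_telescope n k
  rw [sum_range_sub, ← mul_sum, sum_sub_distrib, sum_sub_distrib, ← mul_sum, ← mul_sum,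
    ← mul_sum, ← aperyB_eq_sum_aperySummand le_rfl, ← aperyB_eq_sum_aperySummand (by omega),
    ← aperyB_eq_sum_aperySummand (by omega)] at htel
  have hG : aperyCertificate n (n + 3) = 0 ∧ aperyCertificate n 0 = 0 := by
    simp [aperyCertificate]
  rw [hG.1, hG.2, sub_zero] at htel
  have hc : ((n : ℝ) + 1) * (n + 2) ^ 2 ≠ 0 := by positivity
  linear_combination (mul_eq_zero.1 htel).resolve_left hc

noncomputable def aperyUpper (x : ℝ) : ℝ :=
  11 / 2 + (5 * √5) / 2 - (11 / 2 + (5 * √5) / 2) / x + ((7 * √5) / 10 + 3 / 2) / x ^ 2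
    + 1 / (25 * x ^ 3) + (1 / 25 + (23 * √5) / 1250) / x ^ 4

noncomputable def aperyUpperNum (x : ℝ) : ℝ :=
  (11 / 2 + 5 * √5 / 2) * (x ^ 4 - x ^ 3) + (3 / 2 + 7 * √5 / 10) * x ^ 2 + x / 25
    + (1 / 25 + 23 * √5 / 1250)

theorem aperyUpper_eq_div {x : ℝ} (hx : x ≠ 0) : aperyUpper x = aperyUpperNum x / x ^ 4 := by
  unfold aperyUpper aperyUpperNum
  field_simp
  ring

theorem aperyUpperNum_pos {x : ℝ} (hx : 1 ≤ x) : 0 < aperyUpperNum x := by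
  have hx₄ : 0 ≤ x ^ 4 - x ^ 3 := by
    have : 0 ≤ x ^ 3 * (x - 1) := mul_nonneg (by positivity) (by linarith)
    linarith
  unfold aperyUpperNum
  positivity

theorem aperyUpper_pos {x : ℝ} (hx : 1 ≤ x) : 0 < aperyUpper x := by
  have := aperyUpperNum_pos hx
  rw [aperyUpper_eq_div (by linarith)]
  positivity

noncomputable def aperyStep (m r : ℝ) : ℝ :=
  11 - 11 / m + 3 / m ^ 2 + (m - 1) ^ 2 / m ^ 2 / r

theorem aperyStep_pos {m r : ℝ} (hm : 1 ≤ m) (hr : 0 < r) : 0 < aperyStep m r := by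
  have : 11 / m ≤ 11 := div_le_self (by norm_num) hm
  have : 0 < 3 / m ^ 2 := by positivity
  have : 0 ≤ (m - 1) ^ 2 / m ^ 2 / r := by positivity
  unfold aperyStep
  linarith

theorem aperyStep_lt_aperyStep {m r r' : ℝ} (hm : 1 < m) (hr : 0 < r) (hrr' : r < r') :
    aperyStep m r' < aperyStep m r := by
  have : 0 < (m - 1) ^ 2 / m ^ 2 := by
    have : m - 1 ≠ 0 := by linarith
    positivity
  unfold aperyStep
  linarith [div_lt_div_of_pos_left this hr hrr']

noncomputable def aperyLowerNum (y : ℝ) : ℝ :=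
  (11 * y ^ 2 + 11 * y + 3) * aperyUpperNum y + y ^ 6

theorem aperyStep_aperyUpper_eq_div {y : ℝ} (hy : 1 ≤ y) :
    aperyStep (y + 1) (aperyUpper y) = aperyLowerNum y / ((y + 1) ^ 2 * aperyUpperNum y) := by
  have := (aperyUpperNum_pos hy).ne'
  have : y + 1 ≠ 0 := by linarith
  rw [aperyUpper_eq_div (by linarith)]
  unfold aperyStep aperyLowerNum
  field_simp
  ring

theorem lt_sqrt_five : (2.2360679774 : ℝ) < √5 := by
  rw [Real.lt_sqrt (by norm_num)]
  norm_num

/- With `aperyUpperNum y = P y + √5 Q y`, reducing by `√5 ^ 2 = 5` and expanding around `y = 6`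
leaves only coefficients of the form `p + q √5` with `q > 0`, all positive. -/
theorem aperyUpper_defect_pos {y : ℝ} (hy : 6 ≤ y) :
    0 < aperyUpperNum (y + 2) * aperyLowerNum y
      - (11 * y ^ 2 + 33 * y + 25) * (y + 2) ^ 2 * aperyLowerNum y
      - (y + 1) ^ 4 * (y + 2) ^ 2 * aperyUpperNum y := by
  set s := √5
  have hs : s ^ 2 = 5 := Real.sq_sqrt (by norm_num)
  have hexp : aperyUpperNum (y + 2) * aperyLowerNum y
      - (11 * y ^ 2 + 33 * y + 25) * (y + 2) ^ 2 * aperyLowerNum y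
      - (y + 1) ^ 4 * (y + 2) ^ 2 * aperyUpperNum y
      = (-9780668803 / 62500 + 267960577 / 3125 * s)
        + (-38128672353 / 312500 + 1182251132 / 15625 * s) * (y - 6)
        + (-11928155681 / 312500 + 440443213 / 15625 * s) * (y - 6) ^ 2
        + (-1497489 / 250 + 177778481 / 31250 * s) * (y - 6) ^ 3
        + (-589457 / 1250 + 410784 / 625 * s) * (y - 6) ^ 4
        + (-149 / 10 + 51579 / 1250 * s) * (y - 6) ^ 5
        + 11 / 10 * s * (y - 6) ^ 6 := by
    unfold aperyLowerNum aperyUpperNum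
    linear_combination
      ((5 / 2 * (y + 2) ^ 4 - 5 / 2 * (y + 2) ^ 3 + 7 / 10 * (y + 2) ^ 2 + 23 / 1250)
        * (11 * y ^ 2 + 11 * y + 3)
        * (5 / 2 * y ^ 4 - 5 / 2 * y ^ 3 + 7 / 10 * y ^ 2 + 23 / 1250)) * hs
  have hs' := lt_sqrt_five
  have ht : 0 ≤ y - 6 := by linarith
  rw [hexp]
  have h₁ : 0 ≤ (-38128672353 / 312500 + 1182251132 / 15625 * s) * (y - 6) :=
    mul_nonneg (by linarith) ht
  have h₂ : 0 ≤ (-11928155681 / 312500 + 440443213 / 15625 * s) * (y - 6) ^ 2 :=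
    mul_nonneg (by linarith) (pow_nonneg ht _)
  have h₃ : 0 ≤ (-1497489 / 250 + 177778481 / 31250 * s) * (y - 6) ^ 3 :=
    mul_nonneg (by linarith) (pow_nonneg ht _)
  have h₄ : 0 ≤ (-589457 / 1250 + 410784 / 625 * s) * (y - 6) ^ 4 :=
    mul_nonneg (by linarith) (pow_nonneg ht _)
  have h₅ : 0 ≤ (-149 / 10 + 51579 / 1250 * s) * (y - 6) ^ 5 :=
    mul_nonneg (by linarith) (pow_nonneg ht _)
  have h₆ : 0 ≤ 11 / 10 * s * (y - 6) ^ 6 := by positivity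
  linarith

theorem aperyStep_aperyStep_aperyUpper_lt {y : ℝ} (hy : 6 ≤ y) :
    aperyStep (y + 2) (aperyStep (y + 1) (aperyUpper y)) < aperyUpper (y + 2) := by
  have hN := aperyUpperNum_pos (by linarith : 1 ≤ y)
  have hL : 0 < aperyLowerNum y := by unfold aperyLowerNum; positivity
  have hD := aperyUpper_defect_pos hy
  have hy₁ : y + 1 ≠ 0 := by linarith
  have hy₂ : y + 2 ≠ 0 := by linarith
  have hdiff : aperyUpper (y + 2) - aperyStep (y + 2) (aperyStep (y + 1) (aperyUpper y))
      = (aperyUpperNum (y + 2) * aperyLowerNum y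
          - (11 * y ^ 2 + 33 * y + 25) * (y + 2) ^ 2 * aperyLowerNum y
          - (y + 1) ^ 4 * (y + 2) ^ 2 * aperyUpperNum y) / ((y + 2) ^ 4 * aperyLowerNum y) := by
    rw [aperyStep_aperyUpper_eq_div (by linarith), aperyUpper_eq_div hy₂]
    unfold aperyStep
    field_simp
    ring
  have : 0 < aperyUpper (y + 2) - aperyStep (y + 2) (aperyStep (y + 1) (aperyUpper y)) := by
    rw [hdiff]
    positivity
  linarith

noncomputable def aperyRatio (n : ℕ) : ℝ := aperyB (n + 1) / aperyB n

theorem aperyB_pos (n : ℕ) : 0 < aperyB n :=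
  sum_pos' (fun _ _ => Nat.zero_le _) ⟨0, by simp, by simp⟩

theorem aperyRatio_pos (n : ℕ) : 0 < aperyRatio n := by
  have := aperyB_pos n
  have := aperyB_pos (n + 1)
  unfold aperyRatio
  positivity

theorem aperyRatio_succ (n : ℕ) : aperyRatio (n + 1) = aperyStep (n + 2) (aperyRatio n) := by
  have hB₀ : (aperyB n : ℝ) ≠ 0 := by exact_mod_cast (aperyB_pos n).ne'
  have hB₁ : (aperyB (n + 1) : ℝ) ≠ 0 := by exact_mod_cast (aperyB_pos (n + 1)).ne'
  have hn : (n : ℝ) + 2 ≠ 0 := by positivity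
  have hrec := aperyB_recurrence n
  unfold aperyRatio aperyStep
  field_simp
  linear_combination hrec

theorem aperyRatio_six_mem_Ioo :
    aperyRatio 6 ∈ Set.Ioo (aperyStep 7 (aperyUpper 6)) (aperyUpper 7) := by
  have hB : aperyRatio 6 = 1004307 / 104959 := by
    rw [aperyRatio, show aperyB 6 = 104959 by decide, show aperyB 7 = 1004307 by decide]
    norm_num
  have h6 : aperyUpper 6 = 149857 / 32400 + 3406523 / 1620000 * √5 := by
    unfold aperyUpper; norm_num; ring
  have h7 : aperyUpper 7 = 569641 / 120050 + 3237074 / 1500625 * √5 := by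
    unfold aperyUpper; norm_num; ring
  have hs := lt_sqrt_five
  rw [hB, h7]
  refine ⟨?_, by linarith⟩
  have hpos : 0 < 149857 / 32400 + 3406523 / 1620000 * √5 := by positivity
  have : (7 - 1 : ℝ) ^ 2 / 7 ^ 2 / (149857 / 32400 + 3406523 / 1620000 * √5)
      < 1004307 / 104959 - (11 - 11 / 7 + 3 / 7 ^ 2) := by
    rw [div_lt_iff₀ hpos]
    linarith
  rw [aperyStep, h6]
  linarith

theorem aperyRatio_mem_Ioo {n : ℕ} (hn : 6 ≤ n) :
    aperyRatio n ∈ Set.Ioo (aperyStep (n + 1) (aperyUpper n)) (aperyUpper (n + 1)) := by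
  induction n, hn using Nat.le_induction with
  | base => exact_mod_cast aperyRatio_six_mem_Ioo
  | succ n hn ih =>
    obtain ⟨hlow, hup⟩ := ih
    have hn' : (6 : ℝ) ≤ n := by exact_mod_cast hn
    have hpos : 0 < aperyStep (n + 1) (aperyUpper n) :=
      aperyStep_pos (by linarith) (aperyUpper_pos (by linarith))
    rw [aperyRatio_succ]
    push_cast
    rw [add_assoc, one_add_one_eq_two]
    constructor
    · exact aperyStep_lt_aperyStep (by linarith) (aperyRatio_pos n) hup
    · calc aperyStep (n + 2) (aperyRatio n)
          < aperyStep (n + 2) (aperyStep (n + 1) (aperyUpper n)) :=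
            aperyStep_lt_aperyStep (by linarith) hpos hlow
        _ < aperyUpper (n + 2) := aperyStep_aperyStep_aperyUpper_lt hn'

theorem aperyB_ratio_upper_bound (n : ℕ) (hn : 20 ≤ n) :
    (aperyB n : ℝ) / (aperyB (n - 1) : ℝ) <
      11 / 2 + (5 * Real.sqrt 5) / 2
        - (11 / 2 + (5 * Real.sqrt 5) / 2) / (n : ℝ)
        + ((7 * Real.sqrt 5) / 10 + 3 / 2) / (n : ℝ) ^ 2
        + 1 / (25 * (n : ℝ) ^ 3)
        + (1 / 25 + (23 * Real.sqrt 5) / 1250) / (n : ℝ) ^ 4 := by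
  obtain ⟨m, rfl⟩ : ∃ m, n = m + 1 := ⟨n - 1, by omega⟩
  have h := (aperyRatio_mem_Ioo (by omega : 6 ≤ m)).2
  rw [aperyRatio, aperyUpper] at h
  push_cast
  exact h
end
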